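/- arXiv:2105.05334 — 7 statements merged into one kernel-verified Lean document; each statement's English description precedes it below -/
import Mathlib

section
/- Preservation of the Claim-A exclusion region under an R₂ update step: let Ω ⊆ S and let (c,p) ∈ Ω satisfy Ω ∩ ψ_A(c,p) = ∅. Then for every threshold t > 0, writing Ω' for the image of Ω under U_{2,t} and (c',p') = U_{2,t}(c,p), one has Ω' ∩ ψ_A(c',p') = ∅. -/
/-- The RMM state space `S = {(x_C, x_P) : 0 ≤ x_C ≤ M, 0 ≤ x_P, x_C + x_P ≤ N}`. -/
def RMMState (N M : ℕ) : Set (ℤ × ℤ) :=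
  {x | 0 ≤ x.1 ∧ x.1 ≤ (M : ℤ) ∧ 0 ≤ x.2 ∧ x.1 + x.2 ≤ (N : ℤ)}

/-- The reaction rates `λ₁, λ₂, λ₃, λ₄` (indexed by `Fin 4`, so reaction `Rᵢ` has index `i-1`). -/
noncomputable def RMMrate (k₁ k₂ k₃ k₄ : ℝ) (N M : ℕ) (i : Fin 4) (x : ℤ × ℤ) : ℝ :=
  match i with
  | 0 => k₁ * ((N : ℝ) - (x.1 : ℝ) - (x.2 : ℝ)) * ((M : ℝ) - (x.1 : ℝ))
  | 1 => k₂ * (x.1 : ℝ)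
  | 2 => k₃ * (x.1 : ℝ)
  | 3 => k₄ * (x.2 : ℝ) * ((M : ℝ) - (x.1 : ℝ))

/-- The reaction displacements `R₁ = (1,0)`, `R₂ = (-1,0)`, `R₃ = (-1,1)`, `R₄ = (1,-1)`. -/
def RMMdisp : Fin 4 → ℤ × ℤ
  | 0 => (1, 0)
  | 1 => (-1, 0)
  | 2 => (-1, 1)
  | 3 => (1, -1)

/-- The coupled one-step update `U_{i,t}`: move by `Rᵢ` if `λᵢ(x) ≥ t`, stay put otherwise. -/
noncomputable def RMMupdate (k₁ k₂ k₃ k₄ : ℝ) (N M : ℕ) (i : Fin 4) (t : ℝ)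
    (x : ℤ × ℤ) : ℤ × ℤ :=
  if RMMrate k₁ k₂ k₃ k₄ N M i x ≥ t then x + RMMdisp i else x

/-- Claim-A exclusion region `ψ_A(c,p)`. -/
def psiA (c p : ℤ) : Set (ℤ × ℤ) :=
  {x | x.2 < p} ∪ {x | x.1 < c ∧ x.1 + x.2 ≤ c + p}

/-- Claim-B exclusion region `ψ_B(c,p)`. -/
def psiB (c p : ℤ) : Set (ℤ × ℤ) :=
  {x | x.2 > p} ∪ {x | x.1 > c ∧ x.1 + x.2 > c + p}

/-- The coupled flow: composition of the one-step updates along a list of parameters. -/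
noncomputable def RMMflow (k₁ k₂ k₃ k₄ : ℝ) (N M : ℕ) (L : List (Fin 4 × ℝ))
    (x : ℤ × ℤ) : ℤ × ℤ :=
  L.foldl (fun y q => RMMupdate k₁ k₂ k₃ k₄ N M q.1 q.2 y) x

/-!
`U_{2,t}` shifts a state one step to the left exactly when `k₂ x_C ≥ t`, a condition that is
upward closed in `x_C`. Shifting both `x` and `(c,p)` is a translation, under which `ψ_A` is
covariant; shifting only `(c,p)` shrinks `ψ_A`, which is monotone in `c`; and if `x` moves while
`(c,p)` stays, then `c < x_C`, so the shifted `x` is still not left of `c` and can only enter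
`ψ_A(c,p)` through `x_P < p`, which the shift does not change.
-/

theorem psiA_mono_left {c c' : ℤ} (p : ℤ) (h : c ≤ c') : psiA c p ⊆ psiA c' p := by
  rintro x (hx | ⟨hx₁, hx₂⟩)
  · exact Or.inl hx
  · exact Or.inr ⟨by omega, by omega⟩

theorem sub_one_mem_psiA_sub_one_iff {a b c p : ℤ} :
    (a - 1, b) ∈ psiA (c - 1) p ↔ (a, b) ∈ psiA c p := by
  simp only [psiA, Set.mem_union, Set.mem_ofPred_eq]
  omega

theorem snd_lt_of_mem_psiA {x : ℤ × ℤ} {c p : ℤ} (hc : c ≤ x.1) (hx : x ∈ psiA c p) :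
    x.2 < p := by
  rcases hx with hx | ⟨hx₁, -⟩
  · exact hx
  · omega

section R2

variable {k₁ k₂ k₃ k₄ : ℝ} {N M : ℕ} {t : ℝ}

theorem RMMupdate_one_apply (x : ℤ × ℤ) :
    RMMupdate k₁ k₂ k₃ k₄ N M 1 t x = if t ≤ k₂ * x.1 then (x.1 - 1, x.2) else x := by
  simp only [RMMupdate, RMMrate, RMMdisp, ge_iff_le]
  split_ifs <;> ext <;> simp [sub_eq_add_neg]

theorem RMMupdate_one_preimage_psiA_subset (hk₂ : 0 < k₂) (c p : ℤ) :
    RMMupdate k₁ k₂ k₃ k₄ N M 1 t ⁻¹'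
        psiA (RMMupdate k₁ k₂ k₃ k₄ N M 1 t (c, p)).1
          (RMMupdate k₁ k₂ k₃ k₄ N M 1 t (c, p)).2 ⊆ psiA c p := by
  rintro ⟨a, b⟩ hx
  simp only [Set.mem_preimage, RMMupdate_one_apply] at hx
  split_ifs at hx with hc ha ha
  · exact sub_one_mem_psiA_sub_one_iff.mp hx
  · exact psiA_mono_left p (by omega) hx
  · have hca : c ≤ a - 1 := by
      have hlt : (c : ℝ) < a := lt_of_mul_lt_mul_left ((not_le.mp hc).trans_le ha) hk₂.le
      exact Int.le_sub_one_of_lt (mod_cast hlt)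
    exact Or.inl (snd_lt_of_mem_psiA (x := (a - 1, b)) hca hx)
  · exact hx

end R2

theorem psiA_preserved_R2_general (k₁ k₂ k₃ k₄ : ℝ)
    (hk₂ : 0 < k₂)
    (N M : ℕ)
    (Ω : Set (ℤ × ℤ))
    (c p : ℤ)
    (hdisj : Ω ∩ psiA c p = ∅)
    (t : ℝ) :
    (RMMupdate k₁ k₂ k₃ k₄ N M 1 t '' Ω) ∩
      psiA (RMMupdate k₁ k₂ k₃ k₄ N M 1 t (c, p)).1
        (RMMupdate k₁ k₂ k₃ k₄ N M 1 t (c, p)).2 = ∅ := by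
  rw [← Set.disjoint_iff_inter_eq_empty, Set.disjoint_image_left]
  exact (Set.disjoint_iff_inter_eq_empty.mpr hdisj).mono_right
    (RMMupdate_one_preimage_psiA_subset hk₂ c p)

/-- Preservation of the Claim-A exclusion region under an R2 update step. -/
theorem psiA_preserved_R2 (k₁ k₂ k₃ k₄ : ℝ)
    (hk₁ : 0 < k₁) (hk₂ : 0 < k₂) (hk₃ : 0 < k₃) (hk₄ : 0 < k₄)
    (N M : ℕ) (hM : 1 ≤ M) (hMN : M ≤ N)
    (Ω : Set (ℤ × ℤ)) (hΩ : Ω ⊆ RMMState N M)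
    (c p : ℤ) (hcp : (c, p) ∈ Ω)
    (hdisj : Ω ∩ psiA c p = ∅)
    (t : ℝ) (ht : 0 < t) :
    (RMMupdate k₁ k₂ k₃ k₄ N M 1 t '' Ω) ∩
      psiA (RMMupdate k₁ k₂ k₃ k₄ N M 1 t (c, p)).1
        (RMMupdate k₁ k₂ k₃ k₄ N M 1 t (c, p)).2 = ∅ :=
  psiA_preserved_R2_general k₁ k₂ k₃ k₄ hk₂ N M Ω c p hdisj t
end

section
/- Preservation of the Claim-A exclusion region under an R₃ update step: let Ω ⊆ S and let (c,p) ∈ Ω satisfy Ω ∩ ψ_A(c,p) = ∅. Then for every threshold t > 0, writing Ω' for the image of Ω under U_{3,t} and (c',p') = U_{3,t}(c,p), one has Ω' ∩ ψ_A(c',p') = ∅. -/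
/-- Preservation of the Claim-A exclusion region under an R3 update step. -/
theorem psiA_preserved_R3 (k₁ k₂ k₃ k₄ : ℝ)
    (hk₁ : 0 < k₁) (hk₂ : 0 < k₂) (hk₃ : 0 < k₃) (hk₄ : 0 < k₄)
    (N M : ℕ) (hM : 1 ≤ M) (hMN : M ≤ N)
    (Ω : Set (ℤ × ℤ)) (hΩ : Ω ⊆ RMMState N M)
    (c p : ℤ) (hcp : (c, p) ∈ Ω)
    (hdisj : Ω ∩ psiA c p = ∅)
    (t : ℝ) (ht : 0 < t) :
    (RMMupdate k₁ k₂ k₃ k₄ N M 2 t '' Ω) ∩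
      psiA (RMMupdate k₁ k₂ k₃ k₄ N M 2 t (c, p)).1
        (RMMupdate k₁ k₂ k₃ k₄ N M 2 t (c, p)).2 = ∅ := by
  have hrate : ∀ x : ℤ × ℤ, RMMrate k₁ k₂ k₃ k₄ N M 2 x = k₃ * (x.1 : ℝ) := fun x => rfl
  have hupd : ∀ x : ℤ × ℤ, RMMupdate k₁ k₂ k₃ k₄ N M 2 t x =
      if k₃ * (x.1 : ℝ) ≥ t then (x.1 - 1, x.2 + 1) else x := by
    intro x
    simp only [RMMupdate, hrate, RMMdisp]
    split <;> simp [Prod.ext_iff] <;> ring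
  rw [Set.eq_empty_iff_forall_notMem]
  rintro y ⟨⟨x, hxΩ, rfl⟩, hy⟩
  have hxA : x ∉ psiA c p := fun h =>
    Set.eq_empty_iff_forall_notMem.mp hdisj x ⟨hxΩ, h⟩
  simp only [psiA, Set.mem_union, Set.mem_setOf_eq, not_or, not_and, not_lt, not_le] at hxA
  obtain ⟨h1, h2⟩ := hxA
  rw [hupd x, hupd (c, p)] at hy
  by_cases hx : k₃ * ((x.1 : ℤ) : ℝ) ≥ t <;> by_cases hc : k₃ * ((c : ℤ) : ℝ) ≥ t
  · simp only [hx, hc, if_pos] at hy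
    simp only [psiA, Set.mem_union, Set.mem_setOf_eq] at hy
    rcases hy with h | ⟨h3, h4⟩
    · omega
    · have := h2 (by omega)
      omega
  · simp only [hx, if_pos, hc, if_neg, not_false_iff] at hy
    simp only [psiA, Set.mem_union, Set.mem_setOf_eq] at hy
    have hcx : c < x.1 := by
      have : (c : ℝ) < (x.1 : ℝ) := by
        by_contra hle
        push_neg at hle
        exact hc (le_trans hx (by nlinarith))
      exact_mod_cast this
    rcases hy with h | ⟨h3, h4⟩
    · omega
    · omega
  · simp only [hx, if_neg, not_false_iff, hc, if_pos] at hy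
    simp only [psiA, Set.mem_union, Set.mem_setOf_eq] at hy
    have hxc : x.1 < c := by
      have : (x.1 : ℝ) < (c : ℝ) := by
        by_contra hle
        push_neg at hle
        exact hx (le_trans hc (by nlinarith))
      exact_mod_cast this
    have := h2 hxc
    rcases hy with h | ⟨h3, h4⟩
    · omega
    · omega
  · simp only [hx, hc, if_neg, not_false_iff] at hy
    simp only [psiA, Set.mem_union, Set.mem_setOf_eq] at hy
    rcases hy with h | ⟨h3, h4⟩
    · omega
    · have := h2 h3
      omega
end

section
/- Preservation of the Claim-A exclusion region under an R₄ update step: let Ω ⊆ S and let (c,p) ∈ Ω satisfy Ω ∩ ψ_A(c,p) = ∅. Then for every threshold t > 0, writing Ω' for the image of Ω under U_{4,t} and (c',p') = U_{4,t}(c,p), one has Ω' ∩ ψ_A(c',p') = ∅. -/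
def shiftWhere (P : ℤ × ℤ → Prop) [DecidablePred P] (z : ℤ × ℤ) : ℤ × ℤ :=
  if P z then z + (1, -1) else z

lemma RMMupdate_three_eq_shiftWhere (k₁ k₂ k₃ k₄ : ℝ) (N M : ℕ) (t : ℝ) :
    RMMupdate k₁ k₂ k₃ k₄ N M 3 t = shiftWhere (fun z => t ≤ RMMrate k₁ k₂ k₃ k₄ N M 3 z) :=
  rfl

lemma RMMrate_three_le_of_le {k₁ k₂ k₃ k₄ : ℝ} (hk₄ : 0 ≤ k₄) (N M : ℕ) {a c p : ℤ}
    (hp : 0 ≤ p) (hca : c ≤ a) :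
    RMMrate k₁ k₂ k₃ k₄ N M 3 (a, p) ≤ RMMrate k₁ k₂ k₃ k₄ N M 3 (c, p) := by
  have hca' : (c : ℝ) ≤ a := by exact_mod_cast hca
  exact mul_le_mul_of_nonneg_left (by linarith) (mul_nonneg hk₄ (by exact_mod_cast hp))

lemma mem_psiA {c p : ℤ} {x : ℤ × ℤ} :
    x ∈ psiA c p ↔ x.2 < p ∨ (x.1 < c ∧ x.1 + x.2 ≤ c + p) :=
  Iff.rfl

/-- The only way the shift could carry a point outside `ψ_A(c,p)` into the shifted region is for
it to fire at some `(a, p)` with `c ≤ a` while `(c, p)` stays put; `hP` rules this out. -/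
lemma shiftWhere_notMem_psiA {P : ℤ × ℤ → Prop} [DecidablePred P] {c p : ℤ}
    (hP : ∀ a, c ≤ a → P (a, p) → P (c, p)) {x : ℤ × ℤ} (hx : x ∉ psiA c p) :
    shiftWhere P x ∉ psiA (shiftWhere P (c, p)).1 (shiftWhere P (c, p)).2 := by
  obtain ⟨a, b⟩ := x
  rw [mem_psiA] at hx
  unfold shiftWhere
  by_cases hcp : P (c, p) <;> by_cases hab : P (a, b)
  · simp only [hcp, hab, if_true, mem_psiA, Prod.mk_add_mk]
    omega
  · have hne : (a, b) ≠ (c, p) := fun h => hab (h ▸ hcp)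
    simp only [hcp, hab, if_true, if_false, mem_psiA, Prod.mk_add_mk, ne_eq, Prod.mk.injEq]
      at hne ⊢
    omega
  · have hbp : b ≠ p := fun h => hcp (hP a (by omega) (h ▸ hab))
    simp only [hcp, hab, if_true, if_false, mem_psiA, Prod.mk_add_mk]
    omega
  · simp only [hcp, hab, if_false, mem_psiA]
    omega

theorem psiA_preserved_R4_general (k₁ k₂ k₃ k₄ : ℝ)
    (hk₄ : 0 < k₄)
    (N M : ℕ)
    (Ω : Set (ℤ × ℤ)) (hΩ : Ω ⊆ RMMState N M)
    (c p : ℤ) (hcp : (c, p) ∈ Ω)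
    (hdisj : Ω ∩ psiA c p = ∅)
    (t : ℝ) :
    (RMMupdate k₁ k₂ k₃ k₄ N M 3 t '' Ω) ∩
      psiA (RMMupdate k₁ k₂ k₃ k₄ N M 3 t (c, p)).1
        (RMMupdate k₁ k₂ k₃ k₄ N M 3 t (c, p)).2 = ∅ := by
  have hp : 0 ≤ p := (hΩ hcp).2.2.1
  rw [Set.eq_empty_iff_forall_notMem]
  rintro _ ⟨⟨x, hxΩ, rfl⟩, hy⟩
  have hx : x ∉ psiA c p := fun h => (Set.eq_empty_iff_forall_notMem.mp hdisj) x ⟨hxΩ, h⟩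
  rw [RMMupdate_three_eq_shiftWhere] at hy
  refine shiftWhere_notMem_psiA (fun a hca hfires => ?_) hx hy
  exact hfires.trans (RMMrate_three_le_of_le hk₄.le N M hp hca)

/-- Preservation of the Claim-A exclusion region under an R4 update step. -/
theorem psiA_preserved_R4 (k₁ k₂ k₃ k₄ : ℝ)
    (hk₁ : 0 < k₁) (hk₂ : 0 < k₂) (hk₃ : 0 < k₃) (hk₄ : 0 < k₄)
    (N M : ℕ) (hM : 1 ≤ M) (hMN : M ≤ N)
    (Ω : Set (ℤ × ℤ)) (hΩ : Ω ⊆ RMMState N M)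
    (c p : ℤ) (hcp : (c, p) ∈ Ω)
    (hdisj : Ω ∩ psiA c p = ∅)
    (t : ℝ) (ht : 0 < t) :
    (RMMupdate k₁ k₂ k₃ k₄ N M 3 t '' Ω) ∩
      psiA (RMMupdate k₁ k₂ k₃ k₄ N M 3 t (c, p)).1
        (RMMupdate k₁ k₂ k₃ k₄ N M 3 t (c, p)).2 = ∅ :=
  psiA_preserved_R4_general k₁ k₂ k₃ k₄ hk₄ N M Ω hΩ c p hcp hdisj t
end

section
/- Preservation of the Claim-B exclusion region under an R₁ update step: let Ω ⊆ S and let (c,p) ∈ Ω satisfy Ω ∩ ψ_B(c,p) = ∅. Then for every threshold t > 0, writing Ω' for the image of Ω under U_{1,t} and (c',p') = U_{1,t}(c,p), one has Ω' ∩ ψ_B(c',p') = ∅. -/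
/-- Preservation of the Claim-B exclusion region under an R1 update step. -/
theorem psiB_preserved_R1 (k₁ k₂ k₃ k₄ : ℝ)
    (hk₁ : 0 < k₁) (hk₂ : 0 < k₂) (hk₃ : 0 < k₃) (hk₄ : 0 < k₄)
    (N M : ℕ) (hM : 1 ≤ M) (hMN : M ≤ N)
    (Ω : Set (ℤ × ℤ)) (hΩ : Ω ⊆ RMMState N M)
    (c p : ℤ) (hcp : (c, p) ∈ Ω)
    (hdisj : Ω ∩ psiB c p = ∅)
    (t : ℝ) (ht : 0 < t) :
    (RMMupdate k₁ k₂ k₃ k₄ N M 0 t '' Ω) ∩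
      psiB (RMMupdate k₁ k₂ k₃ k₄ N M 0 t (c, p)).1
        (RMMupdate k₁ k₂ k₃ k₄ N M 0 t (c, p)).2 = ∅ := by
  have hd : ∀ z ∈ Ω, z.2 ≤ p ∧ (z.1 > c → z.1 + z.2 ≤ c + p) := by
    intro z hz
    have : z ∉ psiB c p := by
      intro hzm
      have : z ∈ Ω ∩ psiB c p := ⟨hz, hzm⟩
      rw [hdisj] at this; exact this
    simp only [psiB, Set.mem_union, Set.mem_setOf_eq, not_or, not_and, not_lt] at this
    exact ⟨this.1, fun h => this.2 h⟩
  apply Set.eq_empty_iff_forall_notMem.mpr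
  rintro y ⟨⟨x, hx, rfl⟩, hy⟩
  have hdx := hd x hx
  have hxS := hΩ hx
  have hcpS := hΩ hcp
  obtain ⟨hx0, hxM, hx2, hxN⟩ := hxS
  obtain ⟨hc0, hcM, hp0, hcpN⟩ := hcpS
  simp only [RMMupdate, RMMrate, RMMdisp] at hy
  by_cases h1 : k₁ * ((N : ℝ) - (x.1 : ℝ) - (x.2 : ℝ)) * ((M : ℝ) - (x.1 : ℝ)) ≥ t <;>
    by_cases h2 : k₁ * ((N : ℝ) - ((c, p).1 : ℝ) - ((c, p).2 : ℝ)) * ((M : ℝ) - ((c, p).1 : ℝ)) ≥ t <;>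
    simp only [h1, h2, if_true, if_false, if_pos, if_neg, not_false_iff,
      psiB, Set.mem_union, Set.mem_setOf_eq, Prod.fst_add, Prod.snd_add] at hy
  · rcases hy with h | h
    · omega
    · exact absurd (hdx.2 (by omega)) (by omega)
  · -- x moves, center doesn't
    rcases hy with h | h
    · omega
    · -- x.1 + 1 > c and x.1 + x.2 + 1 > c + p
      have hc1 : (c : ℝ) ≤ (x.1 : ℝ) := by exact_mod_cast (by omega : c ≤ x.1)
      have hs1 : (c : ℝ) + (p : ℝ) ≤ (x.1 : ℝ) + (x.2 : ℝ) := by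
        have : c + p ≤ x.1 + x.2 := by omega
        exact_mod_cast this
      have hsN : (x.1 : ℝ) + (x.2 : ℝ) ≤ (N : ℝ) := by exact_mod_cast hxN
      have hxMr : (x.1 : ℝ) ≤ (M : ℝ) := by exact_mod_cast hxM
      simp only at h2
      push_neg at h2
      have hle : k₁ * ((N : ℝ) - (x.1 : ℝ) - (x.2 : ℝ)) * ((M : ℝ) - (x.1 : ℝ)) ≤
          k₁ * ((N : ℝ) - (c : ℝ) - (p : ℝ)) * ((M : ℝ) - (c : ℝ)) := by
        have hA : (0:ℝ) ≤ (N : ℝ) - (x.1 : ℝ) - (x.2 : ℝ) := by linarith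
        have hB : (0:ℝ) ≤ (M : ℝ) - (x.1 : ℝ) := by linarith
        have hA' : (N : ℝ) - (x.1 : ℝ) - (x.2 : ℝ) ≤ (N : ℝ) - (c : ℝ) - (p : ℝ) := by linarith
        have hB' : (M : ℝ) - (x.1 : ℝ) ≤ (M : ℝ) - (c : ℝ) := by linarith
        have := mul_le_mul hA' hB' hB (by linarith)
        nlinarith [hk₁.le]
      linarith
  · rcases hy with h | h
    · omega
    · exact absurd (hdx.2 (by omega)) (by omega)
  · rcases hy with h | h
    · omega
    · exact absurd (hdx.2 (by omega)) (by omega)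
end

section
/- Preservation of the Claim-B exclusion region under an R₂ update step: let Ω ⊆ S and let (c,p) ∈ Ω satisfy Ω ∩ ψ_B(c,p) = ∅. Then for every threshold t > 0, writing Ω' for the image of Ω under U_{2,t} and (c',p') = U_{2,t}(c,p), one has Ω' ∩ ψ_B(c',p') = ∅. -/
/-- Preservation of the Claim-B exclusion region under an R2 update step. -/
theorem psiB_preserved_R2 (k₁ k₂ k₃ k₄ : ℝ)
    (hk₁ : 0 < k₁) (hk₂ : 0 < k₂) (hk₃ : 0 < k₃) (hk₄ : 0 < k₄)
    (N M : ℕ) (hM : 1 ≤ M) (hMN : M ≤ N)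
    (Ω : Set (ℤ × ℤ)) (hΩ : Ω ⊆ RMMState N M)
    (c p : ℤ) (hcp : (c, p) ∈ Ω)
    (hdisj : Ω ∩ psiB c p = ∅)
    (t : ℝ) (ht : 0 < t) :
    (RMMupdate k₁ k₂ k₃ k₄ N M 1 t '' Ω) ∩
      psiB (RMMupdate k₁ k₂ k₃ k₄ N M 1 t (c, p)).1
        (RMMupdate k₁ k₂ k₃ k₄ N M 1 t (c, p)).2 = ∅ := by
  rw [Set.eq_empty_iff_forall_notMem]
  rintro y ⟨⟨x, hx, rfl⟩, hmem⟩
  have hxnot : x ∉ psiB c p := fun h =>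
    Set.eq_empty_iff_forall_notMem.mp hdisj x ⟨hx, h⟩
  simp only [psiB, Set.mem_union, Set.mem_setOf_eq] at hxnot
  push_neg at hxnot
  obtain ⟨hx2, himp⟩ := hxnot
  have hsum : x.1 ≤ c ∨ x.1 + x.2 ≤ c + p := by
    rcases le_or_gt x.1 c with h | h
    · exact Or.inl h
    · exact Or.inr (himp h)
  have hcast : ∀ a b : ℤ, k₂ * (a : ℝ) ≥ t → ¬ (k₂ * (b : ℝ) ≥ t) → b < a := by
    intro a b ha hb
    by_contra hab
    push_neg at hab
    refine hb (le_trans ha ?_)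
    have : (a : ℝ) ≤ (b : ℝ) := by exact_mod_cast hab
    nlinarith
  simp only [RMMupdate, RMMrate, RMMdisp] at hmem
  by_cases hxc : k₂ * ((x.1 : ℤ) : ℝ) ≥ t <;>
    by_cases hcc : k₂ * ((c : ℤ) : ℝ) ≥ t <;>
    simp only [hxc, hcc, if_true, if_false, if_pos, if_neg, not_false_eq_true,
      psiB, Set.mem_union, Set.mem_setOf_eq, Prod.fst_add, Prod.snd_add] at hmem
  · rcases hmem with h | ⟨h1, h2⟩ <;> rcases hsum with h3 | h3 <;> omega
  · have := hcast _ _ hxc hcc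
    rcases hmem with h | ⟨h1, h2⟩ <;> rcases hsum with h3 | h3 <;> omega
  · have := hcast _ _ hcc hxc
    rcases hmem with h | ⟨h1, h2⟩ <;> rcases hsum with h3 | h3 <;> omega
  · rcases hmem with h | ⟨h1, h2⟩ <;> rcases hsum with h3 | h3 <;> omega
end

section
/- Preservation of the Claim-B exclusion region under an R₃ update step: let Ω ⊆ S and let (c,p) ∈ Ω satisfy Ω ∩ ψ_B(c,p) = ∅. Then for every threshold t > 0, writing Ω' for the image of Ω under U_{3,t} and (c',p') = U_{3,t}(c,p), one has Ω' ∩ ψ_B(c',p') = ∅. -/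
/-! Reaction `R₃` fires exactly on the states with `x_C ≥ t / k₃`, so of two states the one with
larger `x_C` fires whenever the other does. The region `ψ_B` moves rigidly with its corner, which
settles the cases where both or neither state fires. If only the corner fires, the state has
`x_C < c`, hence `x_C ≤ c - 1`, and only the raised level `p + 1` could catch it. If only the state
fires, it has `x_C > c`, so `x_C + x_P ≤ c + p` forces `x_P < p`, and one step up stays at level
`≤ p` with the same `x_C + x_P`. -/

theorem notMem_psiB_iff {x : ℤ × ℤ} {c p : ℤ} :
    x ∉ psiB c p ↔ x.2 ≤ p ∧ (c < x.1 → x.1 + x.2 ≤ c + p) := by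
  simp only [psiB, Set.mem_union, Set.mem_ofPred_eq, not_or, not_and, not_lt, gt_iff_lt]

theorem add_mem_psiB_add_iff (x v : ℤ × ℤ) (c p : ℤ) :
    x + v ∈ psiB (c + v.1) (p + v.2) ↔ x ∈ psiB c p := by
  simp only [psiB, Set.mem_union, Set.mem_ofPred_eq, Prod.fst_add, Prod.snd_add, gt_iff_lt]
  constructor <;> rintro (h | ⟨h₁, h₂⟩) <;> first | (left; omega) | (right; constructor <;> omega)

theorem notMem_psiB_sub_one_add_one {x : ℤ × ℤ} {c p : ℤ} (hxc : x.1 < c) (hx : x ∉ psiB c p) :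
    x ∉ psiB (c - 1) (p + 1) := by
  rw [notMem_psiB_iff] at hx ⊢
  omega

theorem add_R3_notMem_psiB {x : ℤ × ℤ} {c p : ℤ} (hcx : c < x.1) (hx : x ∉ psiB c p) :
    x + (-1, 1) ∉ psiB c p := by
  rw [notMem_psiB_iff] at hx ⊢
  simp only [Prod.fst_add, Prod.snd_add]
  omega

theorem RMMupdate_R3_apply (k₁ k₂ k₃ k₄ : ℝ) (N M : ℕ) (t : ℝ) (x : ℤ × ℤ) :
    RMMupdate k₁ k₂ k₃ k₄ N M 2 t x = if t ≤ k₃ * x.1 then x + (-1, 1) else x :=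
  rfl

theorem RMMupdate_R3_notMem_psiB (k₁ k₂ k₃ k₄ : ℝ) (hk₃ : 0 < k₃) (N M : ℕ) (t : ℝ)
    {x : ℤ × ℤ} {c p : ℤ} (hx : x ∉ psiB c p) :
    RMMupdate k₁ k₂ k₃ k₄ N M 2 t x ∉
      psiB (RMMupdate k₁ k₂ k₃ k₄ N M 2 t (c, p)).1 (RMMupdate k₁ k₂ k₃ k₄ N M 2 t (c, p)).2 := by
  have lt_of_fires {y z : ℤ × ℤ} (hz : t ≤ k₃ * z.1) (hy : ¬t ≤ k₃ * y.1) : y.1 < z.1 := by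
    exact_mod_cast lt_of_mul_lt_mul_left ((not_le.mp hy).trans_le hz) hk₃.le
  simp only [RMMupdate_R3_apply]
  split_ifs with hcf hxf hxf
  · exact (add_mem_psiB_add_iff x (-1, 1) c p).not.mpr hx
  · exact notMem_psiB_sub_one_add_one (lt_of_fires hcf hxf) hx
  · exact add_R3_notMem_psiB (lt_of_fires hxf hcf) hx
  · exact hx

theorem psiB_preserved_R3_general (k₁ k₂ k₃ k₄ : ℝ)
    (hk₃ : 0 < k₃) (N M : ℕ) (Ω : Set (ℤ × ℤ)) (c p : ℤ)
    (hdisj : Ω ∩ psiB c p = ∅)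
    (t : ℝ) :
    (RMMupdate k₁ k₂ k₃ k₄ N M 2 t '' Ω) ∩
      psiB (RMMupdate k₁ k₂ k₃ k₄ N M 2 t (c, p)).1
        (RMMupdate k₁ k₂ k₃ k₄ N M 2 t (c, p)).2 = ∅ := by
  rw [Set.eq_empty_iff_forall_notMem]
  rintro _ ⟨⟨x, hxΩ, rfl⟩, hy⟩
  have hx : x ∉ psiB c p := fun h => Set.eq_empty_iff_forall_notMem.mp hdisj x ⟨hxΩ, h⟩
  exact RMMupdate_R3_notMem_psiB k₁ k₂ k₃ k₄ hk₃ N M t hx hy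

/-- Preservation of the Claim-B exclusion region under an R3 update step. -/
theorem psiB_preserved_R3 (k₁ k₂ k₃ k₄ : ℝ)
    (hk₁ : 0 < k₁) (hk₂ : 0 < k₂) (hk₃ : 0 < k₃) (hk₄ : 0 < k₄)
    (N M : ℕ) (hM : 1 ≤ M) (hMN : M ≤ N)
    (Ω : Set (ℤ × ℤ)) (hΩ : Ω ⊆ RMMState N M)
    (c p : ℤ) (hcp : (c, p) ∈ Ω)
    (hdisj : Ω ∩ psiB c p = ∅)
    (t : ℝ) (ht : 0 < t) :
    (RMMupdate k₁ k₂ k₃ k₄ N M 2 t '' Ω) ∩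
      psiB (RMMupdate k₁ k₂ k₃ k₄ N M 2 t (c, p)).1
        (RMMupdate k₁ k₂ k₃ k₄ N M 2 t (c, p)).2 = ∅ :=
  psiB_preserved_R3_general k₁ k₂ k₃ k₄ hk₃ N M Ω c p hdisj t
end

section
/- Claim B: for every finite sequence of update parameters (i₁,t₁),…,(i_n,t_n) with all t_j > 0, if the coupled flow Φ_n = U_{i_n,t_n} ∘ ⋯ ∘ U_{i₁,t₁} sends the state (0,N) to (c,p), then for every starting state y ∈ S one has Φ_n(y) ∉ ψ_B(c,p); that is, no trajectory started in S occupies a state (x_C, x_P) with x_P > p, nor a state with x_C > c and x_C + x_P > c + p. -/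
/-!
Coupling argument. Order states by `y ≼ x` iff `y_P ≤ x_P` and `y_C + y_P ≤ x_C + x_P`. Each update
`U_{i,t}` keeps `S` invariant and is monotone for `≼` on `S`: a jump of `y` alone (or of `x` alone)
can break `y ≼ x` only when one of the two inequalities is an equality, and there the reaction's rate
at the other state is at least as large, so that state jumps too. Since `(0, N)` dominates every
state of `S` and the down-set of `(c, p)` avoids `ψ_B(c, p)`, the claim follows.
-/

def RMMle (y x : ℤ × ℤ) : Prop :=
  y.2 ≤ x.2 ∧ y.1 + y.2 ≤ x.1 + x.2

theorem notMem_psiB_of_RMMle {z : ℤ × ℤ} {c p : ℤ} (h : RMMle z (c, p)) : z ∉ psiB c p := by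
  rintro (hp | ⟨-, hs⟩)
  · exact absurd h.1 (not_le.mpr hp)
  · exact absurd h.2 (not_le.mpr hs)

theorem RMMle_zero_N_of_mem_RMMState {N M : ℕ} {y : ℤ × ℤ} (hy : y ∈ RMMState N M) :
    RMMle y (0, N) := by
  obtain ⟨h0, -, -, hN⟩ := hy
  show y.2 ≤ N ∧ y.1 + y.2 ≤ 0 + N
  omega

theorem RMMle_add {y x : ℤ × ℤ} (h : RMMle y x) (d : ℤ × ℤ) : RMMle (y + d) (x + d) := by
  simp only [RMMle, Prod.fst_add, Prod.snd_add] at h ⊢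
  omega

section

variable {k₁ k₂ k₃ k₄ : ℝ} {N M : ℕ}

theorem RMMupdate_mem_RMMState {i : Fin 4} {t : ℝ} (ht : 0 < t) {x : ℤ × ℤ}
    (hx : x ∈ RMMState N M) : RMMupdate k₁ k₂ k₃ k₄ N M i t x ∈ RMMState N M := by
  unfold RMMupdate
  split_ifs with hjump
  swap
  · exact hx
  have hrate : RMMrate k₁ k₂ k₃ k₄ N M i x ≠ 0 := (ht.trans_le hjump).ne'
  obtain ⟨a, b⟩ := x
  obtain ⟨ha, haM, hb, habN⟩ : 0 ≤ a ∧ a ≤ M ∧ 0 ≤ b ∧ a + b ≤ N := hx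
  fin_cases i <;>
    simp only [RMMrate, RMMdisp, RMMState, Set.mem_ofPred_eq, Prod.mk_add_mk, add_zero] at hrate ⊢
  · have : (N : ℤ) - a - b ≠ 0 := by exact_mod_cast right_ne_zero_of_mul (left_ne_zero_of_mul hrate)
    have : (M : ℤ) - a ≠ 0 := by exact_mod_cast right_ne_zero_of_mul hrate
    omega
  · have : a ≠ 0 := by exact_mod_cast right_ne_zero_of_mul hrate
    omega
  · have : a ≠ 0 := by exact_mod_cast right_ne_zero_of_mul hrate
    omega
  · have : b ≠ 0 := by exact_mod_cast right_ne_zero_of_mul (left_ne_zero_of_mul hrate)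
    have : (M : ℤ) - a ≠ 0 := by exact_mod_cast right_ne_zero_of_mul hrate
    omega

theorem RMMle_add_RMMdisp_left {i : Fin 4} {y x : ℤ × ℤ} (hy : y ∈ RMMState N M)
    (h : RMMle y x) (hpos : 0 < RMMrate k₁ k₂ k₃ k₄ N M i y)
    (hlt : RMMrate k₁ k₂ k₃ k₄ N M i x < RMMrate k₁ k₂ k₃ k₄ N M i y) :
    RMMle (y + RMMdisp i) x := by
  obtain ⟨a, b⟩ := y
  obtain ⟨c, p⟩ := x
  obtain ⟨ha, haM, -, -⟩ : 0 ≤ a ∧ a ≤ M ∧ 0 ≤ b ∧ a + b ≤ N := hy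
  obtain ⟨hbp, hs⟩ : b ≤ p ∧ a + b ≤ c + p := h
  fin_cases i <;>
    simp only [RMMle, RMMrate, RMMdisp, Prod.mk_add_mk, add_zero] at hpos hlt ⊢
  · refine ⟨hbp, ?_⟩
    by_contra! hne
    have hac : (c : ℝ) ≤ a := by exact_mod_cast (by omega : c ≤ a)
    have hMa : (0 : ℝ) ≤ M - a := sub_nonneg.mpr (by exact_mod_cast haM)
    have hsum : (N : ℝ) - c - p = N - a - b := by
      have : (c : ℝ) + p = a + b := by exact_mod_cast (by omega : c + p = a + b)
      linarith
    rw [hsum] at hlt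
    have hk : 0 < k₁ * (N - a - b) := pos_of_mul_pos_left hpos hMa
    nlinarith
  · omega
  · refine ⟨?_, by omega⟩
    by_contra! hne
    have hac : (a : ℝ) ≤ c := by exact_mod_cast (by omega : a ≤ c)
    have hk : 0 < k₃ := pos_of_mul_pos_left hpos (by exact_mod_cast ha)
    nlinarith
  · omega

theorem RMMle_add_RMMdisp_right {i : Fin 4} {y x : ℤ × ℤ} (hx : x ∈ RMMState N M)
    (h : RMMle y x) (hpos : 0 < RMMrate k₁ k₂ k₃ k₄ N M i x)
    (hlt : RMMrate k₁ k₂ k₃ k₄ N M i y < RMMrate k₁ k₂ k₃ k₄ N M i x) :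
    RMMle y (x + RMMdisp i) := by
  obtain ⟨a, b⟩ := y
  obtain ⟨c, p⟩ := x
  obtain ⟨hc, hcM, -, -⟩ : 0 ≤ c ∧ c ≤ M ∧ 0 ≤ p ∧ c + p ≤ N := hx
  obtain ⟨hbp, hs⟩ : b ≤ p ∧ a + b ≤ c + p := h
  fin_cases i <;>
    simp only [RMMle, RMMrate, RMMdisp, Prod.mk_add_mk, add_zero] at hpos hlt ⊢
  · omega
  · refine ⟨hbp, ?_⟩
    by_contra! hne
    have hca : (c : ℝ) ≤ a := by exact_mod_cast (by omega : c ≤ a)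
    have hk : 0 < k₂ := pos_of_mul_pos_left hpos (by exact_mod_cast hc)
    nlinarith
  · omega
  · refine ⟨?_, by omega⟩
    by_contra! hne
    have hbp' : b = p := by omega
    have hac : (a : ℝ) ≤ c := by exact_mod_cast (by omega : a ≤ c)
    have hMc : (0 : ℝ) ≤ M - c := sub_nonneg.mpr (by exact_mod_cast hcM)
    subst hbp'
    have hk : 0 < k₄ * b := pos_of_mul_pos_left hpos hMc
    nlinarith

theorem RMMle_RMMupdate {i : Fin 4} {t : ℝ} (ht : 0 < t) {y x : ℤ × ℤ}
    (hy : y ∈ RMMState N M) (hx : x ∈ RMMState N M) (h : RMMle y x) :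
    RMMle (RMMupdate k₁ k₂ k₃ k₄ N M i t y) (RMMupdate k₁ k₂ k₃ k₄ N M i t x) := by
  unfold RMMupdate
  split_ifs with hty htx htx
  · exact RMMle_add h _
  · exact RMMle_add_RMMdisp_left hy h (by linarith) (by linarith)
  · exact RMMle_add_RMMdisp_right hx h (by linarith) (by linarith)
  · exact h

variable {L : List (Fin 4 × ℝ)}

theorem RMMflow_mem_RMMState (hL : ∀ q ∈ L, 0 < q.2) {x : ℤ × ℤ} (hx : x ∈ RMMState N M) :
    RMMflow k₁ k₂ k₃ k₄ N M L x ∈ RMMState N M := by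
  induction L generalizing x with
  | nil => simpa only [RMMflow, List.foldl_nil] using hx
  | cons q L ih =>
    exact ih (fun r hr => hL r (List.mem_cons_of_mem q hr))
      (RMMupdate_mem_RMMState (hL q List.mem_cons_self) hx)

theorem RMMle_RMMflow (hL : ∀ q ∈ L, 0 < q.2) {y x : ℤ × ℤ} (hy : y ∈ RMMState N M)
    (hx : x ∈ RMMState N M) (h : RMMle y x) :
    RMMle (RMMflow k₁ k₂ k₃ k₄ N M L y) (RMMflow k₁ k₂ k₃ k₄ N M L x) := by
  induction L generalizing y x with
  | nil => simpa only [RMMflow, List.foldl_nil] using h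
  | cons q L ih =>
    have ht := hL q List.mem_cons_self
    exact ih (fun r hr => hL r (List.mem_cons_of_mem q hr))
      (RMMupdate_mem_RMMState ht hy) (RMMupdate_mem_RMMState ht hx) (RMMle_RMMupdate ht hy hx h)

end

theorem claimB_general (k₁ k₂ k₃ k₄ : ℝ)
    (N M : ℕ)
    (L : List (Fin 4 × ℝ)) (hL : ∀ q ∈ L, 0 < q.2)
    (c p : ℤ) (hB : RMMflow k₁ k₂ k₃ k₄ N M L (0, (N : ℤ)) = (c, p))
    (y : ℤ × ℤ) (hy : y ∈ RMMState N M) :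
    RMMflow k₁ k₂ k₃ k₄ N M L y ∉ psiB c p := by
  have hstart : ((0 : ℤ), (N : ℤ)) ∈ RMMState N M := by simp [RMMState]
  apply notMem_psiB_of_RMMle
  rw [← hB]
  exact RMMle_RMMflow hL hy hstart (RMMle_zero_N_of_mem_RMMState hy)

/-- Claim B: if the trajectory started at `(0,N)` ends at `(c,p)`, then no trajectory
started from a state of `S` ends in the exclusion region `ψ_B(c,p)`. -/
theorem claimB (k₁ k₂ k₃ k₄ : ℝ)
    (hk₁ : 0 < k₁) (hk₂ : 0 < k₂) (hk₃ : 0 < k₃) (hk₄ : 0 < k₄)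
    (N M : ℕ) (hM : 1 ≤ M) (hMN : M ≤ N)
    (L : List (Fin 4 × ℝ)) (hL : ∀ q ∈ L, 0 < q.2)
    (c p : ℤ) (hB : RMMflow k₁ k₂ k₃ k₄ N M L (0, (N : ℤ)) = (c, p))
    (y : ℤ × ℤ) (hy : y ∈ RMMState N M) :
    RMMflow k₁ k₂ k₃ k₄ N M L y ∉ psiB c p :=
  claimB_general k₁ k₂ k₃ k₄ N M L hL c p hB y hy
end
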